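/- Assume b = e and b ≠ 0 (with a, d ∈ ℝ arbitrary). Let u be a solution of the Longstaff–Schwartz equation on Ω, and let ε ∈ ℝ. Then the function w(x,y,t) = u( x/(1 − bε·e^{-bt}), y/(1 − bε·e^{-bt}), t + ln(1 − bε·e^{-bt})/b ) satisfies the Longstaff–Schwartz equation at every point (x,y,t) ∈ Ω with 1 − bε·e^{-bt} > 0. -/

import Mathlib

/-- Partial derivative in `x`. -/
noncomputable def pdX (u : ℝ → ℝ → ℝ → ℝ) (x y t : ℝ) : ℝ := deriv (fun z => u z y t) x

/-- Partial derivative in `y`. -/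
noncomputable def pdY (u : ℝ → ℝ → ℝ → ℝ) (x y t : ℝ) : ℝ := deriv (fun z => u x z t) y

/-- Partial derivative in `t`. -/
noncomputable def pdT (u : ℝ → ℝ → ℝ → ℝ) (x y t : ℝ) : ℝ := deriv (fun z => u x y z) t

/-- Second partial derivative in `x`. -/
noncomputable def pdXX (u : ℝ → ℝ → ℝ → ℝ) (x y t : ℝ) : ℝ := deriv (fun z => pdX u z y t) x

/-- Second partial derivative in `y`. -/
noncomputable def pdYY (u : ℝ → ℝ → ℝ → ℝ) (x y t : ℝ) : ℝ := deriv (fun z => pdY u x z t) y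

/-- The domain `Ω = {(x,y,t) : x > 0, y > 0}`. -/
def Omega : Set (ℝ × ℝ × ℝ) := {p | 0 < p.1 ∧ 0 < p.2.1}

/-- The Longstaff–Schwartz (Kolmogorov backward) equation
`u_t = −((a−bx)·u_x + (d−ey)·u_y + (x/2)·u_xx + (y/2)·u_yy)` holds at the point `(x,y,t)`. -/
def LSEq (a b d e : ℝ) (u : ℝ → ℝ → ℝ → ℝ) (x y t : ℝ) : Prop :=
  pdT u x y t =
    -((a - b * x) * pdX u x y t + (d - e * y) * pdY u x y t +
      x / 2 * pdXX u x y t + y / 2 * pdYY u x y t)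

/-- `u` is a solution of the Longstaff–Schwartz equation on `Ω`: it is C² on `Ω` and
satisfies the equation at every point of `Ω`. -/
def IsLSSolution (a b d e : ℝ) (u : ℝ → ℝ → ℝ → ℝ) : Prop :=
  ContDiffOn ℝ 2 (fun p : ℝ × ℝ × ℝ => u p.1 p.2.1 p.2.2) Omega ∧
  ∀ x y t : ℝ, 0 < x → 0 < y → LSEq a b d e u x y t

/-!
The transformation is a time-dependent dilation `(x, y) ↦ (x, y) / φ(t)` combined with the
time change `τ(t) = t + log φ(t) / b`, where `φ(t) = 1 − bε e^{−bt}`. The dilation divides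
first derivatives by `φ` and second derivatives by `φ²`, and `τ' = 1/φ`, so after multiplying
by `φ` the diffusion terms match exactly. The remaining drift mismatch `b (x − x/φ) u_X / φ`
is cancelled by the term `−x φ'/φ² u_X` from differentiating `x/φ(t)`, because
`φ' = b (1 − φ)`; for this the coefficients of `x` and `y` in the drift have to agree,
i.e. `b = e`.
-/

open Real

noncomputable def scaleTransform (φ τ : ℝ → ℝ) (u : ℝ → ℝ → ℝ → ℝ) : ℝ → ℝ → ℝ → ℝ :=
  fun x y t => u (x / φ t) (y / φ t) (τ t)

def uncurry3 (u : ℝ → ℝ → ℝ → ℝ) (p : ℝ × ℝ × ℝ) : ℝ := u p.1 p.2.1 p.2.2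

-- Needs no differentiability: `z ↦ z / c` is a linear isomorphism for `c ≠ 0`, and for `c = 0`
-- both sides vanish.
lemma deriv_comp_div_const (f : ℝ → ℝ) (c x : ℝ) :
    deriv (fun z => f (z / c)) x = deriv f (x / c) / c := by
  simp only [div_eq_inv_mul]
  rw [deriv_comp_mul_left, smul_eq_mul, mul_comm]

lemma isOpen_Omega : IsOpen Omega :=
  (isOpen_lt continuous_const continuous_fst).inter
    (isOpen_lt continuous_const (continuous_fst.comp continuous_snd))

section

variable (u : ℝ → ℝ → ℝ → ℝ) (φ τ : ℝ → ℝ) {x y t : ℝ}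

lemma pdX_scaleTransform :
    pdX (scaleTransform φ τ u) x y t = pdX u (x / φ t) (y / φ t) (τ t) / φ t :=
  deriv_comp_div_const (fun z => u z (y / φ t) (τ t)) (φ t) x

lemma pdY_scaleTransform :
    pdY (scaleTransform φ τ u) x y t = pdY u (x / φ t) (y / φ t) (τ t) / φ t :=
  deriv_comp_div_const (fun z => u (x / φ t) z (τ t)) (φ t) y

lemma pdXX_scaleTransform :
    pdXX (scaleTransform φ τ u) x y t = pdXX u (x / φ t) (y / φ t) (τ t) / φ t ^ 2 := by
  simp only [pdXX, pdX_scaleTransform]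
  rw [deriv_div_const, deriv_comp_div_const (fun z => pdX u z (y / φ t) (τ t)), div_div, sq]

lemma pdYY_scaleTransform :
    pdYY (scaleTransform φ τ u) x y t = pdYY u (x / φ t) (y / φ t) (τ t) / φ t ^ 2 := by
  simp only [pdYY, pdY_scaleTransform]
  rw [deriv_div_const, deriv_comp_div_const (fun z => pdY u (x / φ t) z (τ t)), div_div, sq]

end

section

variable (u : ℝ → ℝ → ℝ → ℝ) {f g h : ℝ → ℝ} {f' g' h' s x y t : ℝ}

lemma hasDerivAt_comp_curve_fderiv (hu : DifferentiableAt ℝ (uncurry3 u) (f s, g s, h s))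
    (hf : HasDerivAt f f' s) (hg : HasDerivAt g g' s) (hh : HasDerivAt h h' s) :
    HasDerivAt (fun s => u (f s) (g s) (h s))
      (fderiv ℝ (uncurry3 u) (f s, g s, h s) (f', g', h')) s :=
  hu.hasFDerivAt.comp_hasDerivAt (l := uncurry3 u) s (hf.prodMk (hg.prodMk hh))

variable {u}

lemma pdX_eq_fderiv (hu : DifferentiableAt ℝ (uncurry3 u) (x, y, t)) :
    pdX u x y t = fderiv ℝ (uncurry3 u) (x, y, t) (1, 0, 0) :=
  (hasDerivAt_comp_curve_fderiv u hu (hasDerivAt_id' x) (hasDerivAt_const x y)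
    (hasDerivAt_const x t)).deriv

lemma pdY_eq_fderiv (hu : DifferentiableAt ℝ (uncurry3 u) (x, y, t)) :
    pdY u x y t = fderiv ℝ (uncurry3 u) (x, y, t) (0, 1, 0) :=
  (hasDerivAt_comp_curve_fderiv u hu (hasDerivAt_const y x) (hasDerivAt_id' y)
    (hasDerivAt_const y t)).deriv

lemma pdT_eq_fderiv (hu : DifferentiableAt ℝ (uncurry3 u) (x, y, t)) :
    pdT u x y t = fderiv ℝ (uncurry3 u) (x, y, t) (0, 0, 1) :=
  (hasDerivAt_comp_curve_fderiv u hu (hasDerivAt_const t x) (hasDerivAt_const t y)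
    (hasDerivAt_id' t)).deriv

lemma hasDerivAt_comp_curve (hu : DifferentiableAt ℝ (uncurry3 u) (f s, g s, h s))
    (hf : HasDerivAt f f' s) (hg : HasDerivAt g g' s) (hh : HasDerivAt h h' s) :
    HasDerivAt (fun s => u (f s) (g s) (h s))
      (f' * pdX u (f s) (g s) (h s) + g' * pdY u (f s) (g s) (h s) +
        h' * pdT u (f s) (g s) (h s)) s := by
  have hbasis : ((f', g', h') : ℝ × ℝ × ℝ) = f' • (1, 0, 0) + g' • (0, 1, 0) + h' • (0, 0, 1) := by
    simp
  convert hasDerivAt_comp_curve_fderiv u hu hf hg hh using 1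
  rw [hbasis, map_add, map_add, map_smul, map_smul, map_smul, pdX_eq_fderiv hu,
    pdY_eq_fderiv hu, pdT_eq_fderiv hu, smul_eq_mul, smul_eq_mul, smul_eq_mul]

end

lemma pdT_scaleTransform (u : ℝ → ℝ → ℝ → ℝ) {φ τ : ℝ → ℝ} {φ' τ' x y t : ℝ}
    (hu : DifferentiableAt ℝ (uncurry3 u) (x / φ t, y / φ t, τ t))
    (hφ : HasDerivAt φ φ' t) (hφ0 : φ t ≠ 0) (hτ : HasDerivAt τ τ' t) :
    pdT (scaleTransform φ τ u) x y t =
      -(x * φ') / φ t ^ 2 * pdX u (x / φ t) (y / φ t) (τ t) +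
        -(y * φ') / φ t ^ 2 * pdY u (x / φ t) (y / φ t) (τ t) +
        τ' * pdT u (x / φ t) (y / φ t) (τ t) := by
  have hx : HasDerivAt (fun s => x / φ s) (-(x * φ') / φ t ^ 2) t := by
    simpa [Pi.div_def] using (hasDerivAt_const t x).div hφ hφ0
  have hy : HasDerivAt (fun s => y / φ s) (-(y * φ') / φ t ^ 2) t := by
    simpa [Pi.div_def] using (hasDerivAt_const t y).div hφ hφ0
  exact (hasDerivAt_comp_curve hu hx hy hτ).deriv

theorem lsEq_scaleTransform {a b d : ℝ} (u : ℝ → ℝ → ℝ → ℝ) {φ τ : ℝ → ℝ} {x y t : ℝ}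
    (hu : DifferentiableAt ℝ (uncurry3 u) (x / φ t, y / φ t, τ t))
    (hφ : HasDerivAt φ (b * (1 - φ t)) t) (hφ0 : φ t ≠ 0) (hτ : HasDerivAt τ (φ t)⁻¹ t)
    (hLS : LSEq a b d b u (x / φ t) (y / φ t) (τ t)) :
    LSEq a b d b (scaleTransform φ τ u) x y t := by
  unfold LSEq at hLS ⊢
  rw [pdT_scaleTransform u hu hφ hφ0 hτ, pdX_scaleTransform, pdY_scaleTransform,
    pdXX_scaleTransform, pdYY_scaleTransform, hLS]
  field_simp
  ring

/-- Symmetry of the Longstaff–Schwartz equation when `b = e ≠ 0` (subcase 2.2, group `G₂`). -/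
theorem ls_symmetry_b_eq_e_G2 (a b d e : ℝ) (hbe : b = e) (hb : b ≠ 0)
    (u : ℝ → ℝ → ℝ → ℝ) (hu : IsLSSolution a b d e u) (ε : ℝ) :
    ∀ x y t : ℝ, 0 < x → 0 < y → 1 - b * ε * Real.exp (-(b * t)) > 0 →
      LSEq a b d e
        (fun x y t =>
          u (x / (1 - b * ε * Real.exp (-(b * t)))) (y / (1 - b * ε * Real.exp (-(b * t))))
            (t + Real.log (1 - b * ε * Real.exp (-(b * t))) / b))
        x y t := by
  subst hbe
  intro x y t hx hy hφt
  set φ : ℝ → ℝ := fun s => 1 - b * ε * exp (-(b * s))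
  have hφ0 : φ t ≠ 0 := hφt.ne'
  have hφ : HasDerivAt φ (b * (1 - φ t)) t :=
    ((((hasDerivAt_id' t).const_mul b).fun_neg.exp.const_mul (b * ε)).const_sub 1).congr_deriv
      (by ring)
  have hτ : HasDerivAt (fun s => s + log (φ s) / b) (φ t)⁻¹ t :=
    ((hasDerivAt_id' t).add ((hφ.log hφ0).div_const b)).congr_deriv (by field_simp; ring)
  have hX : 0 < x / φ t := div_pos hx hφt
  have hY : 0 < y / φ t := div_pos hy hφt
  have hdiff : DifferentiableAt ℝ (uncurry3 u) (x / φ t, y / φ t, t + log (φ t) / b) :=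
    (hu.1.contDiffAt (isOpen_Omega.mem_nhds ⟨hX, hY⟩)).differentiableAt (by norm_num)
  exact lsEq_scaleTransform u hdiff hφ hφ0 hτ (hu.2 _ _ _ hX hY)
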